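/- arXiv:1910.10612 — 2 statements merged into one kernel-verified Lean document; each statement's English description precedes it below -/
import Mathlib

section
/- Let G be a finite simple graph and let v be any vertex of G. Then for every 3-element subset {i,j,k} of the vertex set, the induced subgraph of G on {i,j,k} contains an even number of edges if and only if the induced subgraph of μ_v(G) on {i,j,k} contains an even number of edges. (This expresses combinatorially that mutation does not change the point scheme of the associated (±1)-skew polynomial algebra.) -/
open Classical Finset

noncomputable section

/-- The mutation `μ_v(G)` of a graph `G` at a vertex `v`: edges not incident to `v`
are those of `G`; edges incident to `v` are the pairs `vw` with `w ≠ v`, `w ∉ N_G(v)`. -/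
def mutation {V : Type*} (G : SimpleGraph V) (v : V) : SimpleGraph V where
  Adj x y := x ≠ y ∧
    ((x = v ∧ ¬ G.Adj v y) ∨ (y = v ∧ ¬ G.Adj v x) ∨ (x ≠ v ∧ y ≠ v ∧ G.Adj x y))
  symm := by
    constructor
    rintro x y ⟨hxy, h | h | ⟨h1, h2, h3⟩⟩
    · exact ⟨hxy.symm, Or.inr (Or.inl h)⟩
    · exact ⟨hxy.symm, Or.inl h⟩
    · exact ⟨hxy.symm, Or.inr (Or.inr ⟨h2, h1, h3.symm⟩)⟩
  loopless := by
    constructor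
    rintro x ⟨hxx, -⟩
    exact hxx rfl

/-- The relative mutation `μ_{v←u}(G)` of `G` at `v` with respect to `u`: edges not
incident to `v` are those of `G`; edges incident to `v` are the pairs `vw` with
`w ≠ v` and `w` in the symmetric difference `N_G(u) Δ N_G(v)`. -/
def relMutation {V : Type*} (G : SimpleGraph V) (v u : V) : SimpleGraph V where
  Adj x y := x ≠ y ∧
    ((x = v ∧ (G.Adj u y ↔ ¬ G.Adj v y)) ∨ (y = v ∧ (G.Adj u x ↔ ¬ G.Adj v x)) ∨
      (x ≠ v ∧ y ≠ v ∧ G.Adj x y))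
  symm := by
    constructor
    rintro x y ⟨hxy, h | h | ⟨h1, h2, h3⟩⟩
    · exact ⟨hxy.symm, Or.inr (Or.inl h)⟩
    · exact ⟨hxy.symm, Or.inl h⟩
    · exact ⟨hxy.symm, Or.inr (Or.inr ⟨h2, h1, h3.symm⟩)⟩
  loopless := by
    constructor
    rintro x ⟨hxx, -⟩
    exact hxx rfl

/-- A vertex is isolated if it has no neighbors. -/
def isIsolated {V : Type*} (G : SimpleGraph V) (v : V) : Prop := ∀ w, ¬ G.Adj v w

/-- `pairGraph a b` is the graph `G(a,b)` on `2a+b` vertices consisting of `a`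
pairwise disjoint edges `{0,1}, {2,3}, …` together with `b` isolated vertices. -/
def pairGraph (a b : ℕ) : SimpleGraph (Fin (2 * a + b)) where
  Adj x y := x ≠ y ∧ (x : ℕ) / 2 = (y : ℕ) / 2 ∧ (x : ℕ) < 2 * a
  symm := by
    constructor
    rintro x y ⟨h1, h2, h3⟩
    exact ⟨h1.symm, h2.symm, by omega⟩
  loopless := by
    constructor
    rintro x ⟨hxx, -⟩
    exact hxx rfl

/-- The adjacency matrix `M(G)` of `G`, over `F_2`. -/
def adjMat {n : ℕ} (G : SimpleGraph (Fin n)) : Matrix (Fin n) (Fin n) (ZMod 2) :=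
  fun i j => if G.Adj i j then 1 else 0

/-- The matrix `X(G)` over `F_2`: upper-left `n×n` block is `M(G)`, and the last row
and column consist entirely of `1`'s except for the `(n+1, n+1)` entry, which is `0`. -/
def Xmat {n : ℕ} (G : SimpleGraph (Fin n)) :
    Matrix (Fin (n + 1)) (Fin (n + 1)) (ZMod 2) :=
  fun i j =>
    if hi : (i : ℕ) < n then
      if hj : (j : ℕ) < n then adjMat G ⟨i, hi⟩ ⟨j, hj⟩ else 1
    else if (j : ℕ) < n then 1 else 0

/-- Finite simple graphs on vertex sets `{1, …, n}`, bundled with `n`. -/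
abbrev GraphOn := Σ n : ℕ, SimpleGraph (Fin n)

/-- One move: either pass to an isomorphic graph, or apply a mutation `μ_v`, or apply a
relative mutation `μ_{v←w}` to a graph containing an isolated vertex `u ∉ {v, w}`. -/
inductive MoveStep : GraphOn → GraphOn → Prop
  | iso {n m : ℕ} (G : SimpleGraph (Fin n)) (H : SimpleGraph (Fin m)) :
      Nonempty (G ≃g H) → MoveStep ⟨n, G⟩ ⟨m, H⟩
  | mut {n : ℕ} (G : SimpleGraph (Fin n)) (v : Fin n) :
      MoveStep ⟨n, G⟩ ⟨n, mutation G v⟩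
  | relMut {n : ℕ} (G : SimpleGraph (Fin n)) (v w u : Fin n) :
      v ≠ w → u ≠ v → u ≠ w → isIsolated G u →
      MoveStep ⟨n, G⟩ ⟨n, relMutation G v w⟩

/-- `G ≈ G'`: `G'` is obtained from `G`, up to graph isomorphism, by a finite
sequence of mutations and relative mutations (the latter in the presence of an
isolated vertex distinct from the two vertices involved). -/
def graphEquiv (A B : GraphOn) : Prop := Relation.ReflTransGen MoveStep A B

/-- The induced subgraph of `G` on `{i, j, k}` has an even number of edges. -/
def evenTriple {V : Type*} (G : SimpleGraph V) (i j k : V) : Prop :=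
  Even ((if G.Adj i j then 1 else 0) + (if G.Adj i k then 1 else 0) +
    (if G.Adj j k then 1 else 0) : ℕ)

/-- `ℓ(G)`: the number of 2-element subsets `{i, j}` (encoded as pairs `i < j`) such
that for every vertex `k ∉ {i, j}` the induced subgraph of `G` on `{i, j, k}` has an
even number of edges. -/
def ell {n : ℕ} (G : SimpleGraph (Fin n)) : ℕ :=
  ((univ : Finset (Fin n × Fin n)).filter
    (fun p => p.1 < p.2 ∧ ∀ k, k ≠ p.1 → k ≠ p.2 → evenTriple G p.1 p.2 k)).card

/-- `J(G)`: the set of 2-element subsets `{i, j}` (encoded as pairs `i < j`) with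
`N_G(i) = N_G(j) ≠ ∅`. -/
def Jfinset {n : ℕ} (G : SimpleGraph (Fin n)) : Finset (Fin n × Fin n) :=
  (univ : Finset (Fin n × Fin n)).filter
    (fun p => p.1 < p.2 ∧ G.neighborSet p.1 = G.neighborSet p.2 ∧
      G.neighborSet p.1 ≠ ∅)

/-- `j(G) = #J(G)`. -/
def jnum {n : ℕ} (G : SimpleGraph (Fin n)) : ℕ := (Jfinset G).card

/-- `i(G)`: the number of isolated vertices of `G`. -/
def numIso {n : ℕ} (G : SimpleGraph (Fin n)) : ℕ :=
  ((univ : Finset (Fin n)).filter (fun v => isIsolated G v)).card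

end

/-!
Mutation at `v` complements exactly the pairs through `v`. Of the three pairs of a
triangle `{i, j, k}`, either two or none pass through `v`, so the parity of its edge count
is unchanged.
-/

section Mutation

variable {V : Type*} (G : SimpleGraph V) {v x y : V}

theorem mutation_adj_of_ne (hx : x ≠ v) (hy : y ≠ v) :
    (mutation G v).Adj x y ↔ G.Adj x y := by
  refine ⟨?_, fun h => ⟨G.ne_of_adj h, .inr (.inr ⟨hx, hy, h⟩)⟩⟩
  rintro ⟨-, ⟨rfl, -⟩ | ⟨rfl, -⟩ | ⟨-, -, h⟩⟩
  · exact absurd rfl hx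
  · exact absurd rfl hy
  · exact h

theorem mutation_adj_self_left (hy : y ≠ v) : (mutation G v).Adj v y ↔ ¬G.Adj v y := by
  refine ⟨?_, fun h => ⟨hy.symm, .inl ⟨rfl, h⟩⟩⟩
  rintro ⟨-, ⟨-, h⟩ | ⟨rfl, -⟩ | ⟨h, -, -⟩⟩
  · exact h
  · exact absurd rfl hy
  · exact absurd rfl h

end Mutation

section EvenTriple

variable {V : Type*} {G H : SimpleGraph V} {i j k v : V}

theorem evenTriple_swap : evenTriple G i j k ↔ evenTriple G j i k := by
  simp only [evenTriple, G.adj_comm j i, add_right_comm]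

theorem evenTriple_rotate : evenTriple G i j k ↔ evenTriple G k i j := by
  simp only [evenTriple, G.adj_comm k i, G.adj_comm k j, add_comm, add_assoc]

theorem evenTriple_congr_of_flip_left (hij : H.Adj i j ↔ ¬G.Adj i j)
    (hik : H.Adj i k ↔ ¬G.Adj i k) (hjk : H.Adj j k ↔ G.Adj j k) :
    evenTriple G i j k ↔ evenTriple H i j k := by
  simp only [evenTriple, hij, hik, hjk]
  split_ifs <;> decide

theorem evenTriple_mutation_self (hj : j ≠ v) (hk : k ≠ v) :
    evenTriple G v j k ↔ evenTriple (mutation G v) v j k :=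
  evenTriple_congr_of_flip_left (mutation_adj_self_left G hj) (mutation_adj_self_left G hk)
    (mutation_adj_of_ne G hj hk)

end EvenTriple

/-- for any vertex `v` and any 3-element subset `{i, j, k}` of the
vertices, the induced subgraph of `G` on `{i, j, k}` has an even number of edges iff
the induced subgraph of `μ_v(G)` on `{i, j, k}` does. -/
theorem stmt_13 {n : ℕ} (G : SimpleGraph (Fin n)) (v : Fin n) (i j k : Fin n)
    (hij : i ≠ j) (hik : i ≠ k) (hjk : j ≠ k) :
    evenTriple G i j k ↔ evenTriple (mutation G v) i j k := by
  rcases eq_or_ne i v with rfl | hi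
  · exact evenTriple_mutation_self hij.symm hik.symm
  rcases eq_or_ne j v with rfl | hj
  · rw [evenTriple_swap, evenTriple_swap (G := mutation G j)]
    exact evenTriple_mutation_self hij hjk.symm
  rcases eq_or_ne k v with rfl | hk
  · rw [evenTriple_rotate, evenTriple_rotate (G := mutation G k)]
    exact evenTriple_mutation_self hik hjk
  simp only [evenTriple, mutation_adj_of_ne G hi hj, mutation_adj_of_ne G hi hk,
    mutation_adj_of_ne G hj hk]
end

section
/- Let G be a finite simple graph on n vertices and let r = (n+1) − rank_{F_2} X(G) be the nullity over F_2 of the matrix X(G). Then ℓ(G) ≤ C(r+1, 2), where C(r+1,2) = (r+1)r/2 is the binomial coefficient. -/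
open Classical Finset

/-!
Over `F₂`, evenness of all triples through `i` and `j` says that rows `i` and `j` of `M(G)`
differ by a constant vector, which is an equivalence relation, and `ℓ(G)` counts the pairs
inside its classes. For such a pair, `eᵢ + eⱼ + a_{ij} e_{n+1}` lies in the kernel of `X(G)`.
Pairing each vertex `t` that is not the least element `m` of its class with `m` gives kernel
vectors whose coordinates at the non-minimal vertices form the identity, so there are at most
`r` non-minimal vertices. A pair `i < j` of one class is recorded by the unordered pair
`{i, j}` of non-minimal vertices, or by `{j, j}` when `i` is the minimum of the class; this
encoding is injective, so `ℓ(G) ≤ C(r + 1, 2)`.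
-/

namespace Setoid

variable {α : Type*} [Fintype α] [LinearOrder α] (s : Setoid α)

noncomputable def minRep (j : α) : α :=
  (univ.filter fun i => s i j).min' ⟨j, mem_filter.2 ⟨mem_univ _, s.refl j⟩⟩

lemma minRep_rel (j : α) : s (s.minRep j) j :=
  (mem_filter.1 (min'_mem (univ.filter fun i => s i j) _)).2

lemma minRep_le_of_rel {i j : α} (h : s i j) : s.minRep j ≤ i :=
  min'_le (univ.filter fun i => s i j) _ (mem_filter.2 ⟨mem_univ _, h⟩)

lemma minRep_eq_of_rel {i j : α} (h : s i j) : s.minRep i = s.minRep j := by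
  have hset : (univ.filter fun k => s k i) = univ.filter fun k => s k j := by
    ext k
    simp only [mem_filter, mem_univ, true_and]
    exact ⟨fun hk => s.trans hk h, fun hk => s.trans hk (s.symm h)⟩
  simp only [minRep, hset]

lemma minRep_minRep (j : α) : s.minRep (s.minRep j) = s.minRep j :=
  s.minRep_eq_of_rel (s.minRep_rel j)

noncomputable def nonMinReps : Finset α := univ.filter fun j => s.minRep j ≠ j

lemma mem_nonMinReps {j : α} : j ∈ s.nonMinReps ↔ s.minRep j ≠ j := by
  simp [nonMinReps]

lemma card_related_pairs_le :
    #(univ.filter fun p : α × α => p.1 < p.2 ∧ s p.1 p.2) ≤ (#s.nonMinReps + 1).choose 2 := by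
  rw [← card_sym2]
  refine card_le_card_of_injOn (fun p => if p.1 = s.minRep p.2 then s(p.2, p.2) else s(p.1, p.2))
    ?_ ?_
  · rintro ⟨i, j⟩ hij
    simp only [coe_filter, mem_univ, true_and, Set.mem_ofPred_eq] at hij
    have hj : j ∈ s.nonMinReps :=
      s.mem_nonMinReps.2 ((s.minRep_le_of_rel hij.2).trans_lt hij.1).ne
    dsimp only
    split_ifs with hi
    · simpa using hj
    · simp only [mem_coe, mk_mem_sym2_iff, hj, and_true, mem_nonMinReps]
      rwa [s.minRep_eq_of_rel hij.2, ne_comm]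
  · rintro ⟨i, j⟩ hij ⟨i', j'⟩ hij' heq
    simp only [coe_filter, mem_univ, true_and, Set.mem_ofPred_eq] at hij hij'
    dsimp only at heq
    split_ifs at heq with hi hi' hi' <;> simp only [Sym2.eq_iff, and_self, or_self] at heq
    · subst heq
      rw [hi, hi']
    · rcases heq with ⟨rfl, rfl⟩ | ⟨rfl, rfl⟩ <;> exact absurd hij'.1 (lt_irrefl _)
    · obtain ⟨rfl, rfl⟩ := heq
      exact absurd hij.1 (lt_irrefl _)
    · rcases heq with ⟨rfl, rfl⟩ | ⟨rfl, rfl⟩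
      · rfl
      · exact absurd (hij.1.trans hij'.1) (lt_irrefl _)

end Setoid

lemma linearIndependent_of_apply_eq_single {K ι κ : Type*} [Field K] [Fintype ι] [DecidableEq ι]
    {v : ι → κ → K} (f : ι → κ) (hv : ∀ i j, v i (f j) = (Pi.single i (1 : K) : ι → K) j) :
    LinearIndependent K v := by
  refine LinearIndependent.of_comp (LinearMap.funLeft K K f) ?_
  convert (Pi.basisFun K ι).linearIndependent
  ext i j
  simp [hv]

open Matrix

lemma Matrix.card_add_rank_le_of_linearIndependent {K m n ι : Type*} [Field K] [Fintype n]
    [Fintype ι] (A : Matrix m n K) {v : ι → n → K} (hv : LinearIndependent K v)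
    (hker : ∀ i, A *ᵥ v i = 0) : Fintype.card ι + A.rank ≤ Fintype.card n := by
  have hspan : Submodule.span K (Set.range v) ≤ LinearMap.ker A.mulVecLin :=
    Submodule.span_le.2 (Set.range_subset_iff.2 hker)
  have hcard := Submodule.finrank_mono hspan
  rw [finrank_span_eq_card hv] at hcard
  have := LinearMap.finrank_range_add_finrank_ker A.mulVecLin
  rw [Module.finrank_fintype_fun_eq_card] at this
  rw [Matrix.rank]
  omega

section Graph

variable {n : ℕ} (G : SimpleGraph (Fin n))

lemma adjMat_symm (i j : Fin n) : adjMat G i j = adjMat G j i := by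
  simp only [adjMat, SimpleGraph.adj_comm]

@[simp]
lemma adjMat_self (i : Fin n) : adjMat G i i = 0 := by
  simp [adjMat]

lemma evenTriple_iff_adjMat (i j k : Fin n) :
    evenTriple G i j k ↔ adjMat G i j + adjMat G i k + adjMat G j k = 0 := by
  unfold evenTriple adjMat
  split_ifs <;> decide

def rowSetoid : Setoid (Fin n) where
  r i j := ∃ c, ∀ k, adjMat G i k + adjMat G j k = c
  iseqv :=
    { refl := fun _ => ⟨0, fun _ => CharTwo.add_self_eq_zero _⟩
      symm := fun ⟨c, h⟩ => ⟨c, fun k => by rw [add_comm, h]⟩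
      trans := fun ⟨c, h⟩ ⟨d, h'⟩ => ⟨c + d, fun k => by grind⟩ }

lemma rowSetoid_iff {i j : Fin n} :
    rowSetoid G i j ↔ ∀ k, adjMat G i k + adjMat G j k = adjMat G i j := by
  refine ⟨fun ⟨c, h⟩ => ?_, fun h => ⟨_, h⟩⟩
  have hc := h i
  rw [adjMat_self, zero_add, adjMat_symm] at hc
  rwa [hc]

lemma forall_evenTriple_iff_rowSetoid (i j : Fin n) :
    (∀ k, k ≠ i → k ≠ j → evenTriple G i j k) ↔ rowSetoid G i j := by
  simp only [rowSetoid_iff, evenTriple_iff_adjMat]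
  refine ⟨fun h k => ?_, fun h k _ _ => ?_⟩
  · by_cases hki : k = i
    · rw [hki, adjMat_self, zero_add, adjMat_symm]
    by_cases hkj : k = j
    · rw [hkj, adjMat_self, add_zero]
    grind
  · grind

@[simp]
lemma Xmat_castSucc_castSucc (i j : Fin n) : Xmat G i.castSucc j.castSucc = adjMat G i j := by
  simp [Xmat]

@[simp]
lemma Xmat_castSucc_last (i : Fin n) : Xmat G i.castSucc (Fin.last n) = 1 := by
  simp [Xmat]

@[simp]
lemma Xmat_last_castSucc (j : Fin n) : Xmat G (Fin.last n) j.castSucc = 1 := by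
  simp [Xmat]

@[simp]
lemma Xmat_last_last : Xmat G (Fin.last n) (Fin.last n) = 0 := by
  simp [Xmat]

noncomputable def pairVec (i j : Fin n) : Fin (n + 1) → ZMod 2 :=
  Pi.single i.castSucc 1 + Pi.single j.castSucc 1 + Pi.single (Fin.last n) (adjMat G i j)

lemma pairVec_castSucc (i j t : Fin n) :
    pairVec G i j t.castSucc = (if t = i then 1 else 0) + if t = j then 1 else 0 := by
  simp [pairVec, Pi.single_apply]

lemma Xmat_mulVec_pairVec {i j : Fin n} (h : rowSetoid G i j) : Xmat G *ᵥ pairVec G i j = 0 := by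
  rw [rowSetoid_iff] at h
  ext k
  induction k using Fin.lastCases with
  | last => simp [pairVec, mulVec_add, CharTwo.add_self_eq_zero]
  | cast k =>
    simp [pairVec, mulVec_add, adjMat_symm G k, h k, CharTwo.add_self_eq_zero]

lemma card_nonMinReps_add_rank_le : #(rowSetoid G).nonMinReps + (Xmat G).rank ≤ n + 1 := by
  set s := rowSetoid G
  have hv : LinearIndependent (ZMod 2) fun j : s.nonMinReps => pairVec G (s.minRep j) j := by
    refine linearIndependent_of_apply_eq_single (fun t => (t : Fin n).castSucc) fun j t => ?_
    have hroot : s.minRep j ≠ t := fun h => s.mem_nonMinReps.1 t.2 (h ▸ s.minRep_minRep j)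
    rw [pairVec_castSucc, if_neg hroot.symm, zero_add, Pi.single_apply]
    exact if_congr Subtype.ext_iff.symm rfl rfl
  simpa using (Xmat G).card_add_rank_le_of_linearIndependent hv
    fun j => Xmat_mulVec_pairVec G (s.minRep_rel j)

end Graph

/-- if `r = (n+1) − rank_{F_2} X(G)` is the nullity of `X(G)`, then
`ℓ(G) ≤ C(r+1, 2)`. -/
theorem stmt_19 {n : ℕ} (G : SimpleGraph (Fin n)) (r : ℕ)
    (hr : (r : ℤ) = (n + 1 : ℤ) - ((Xmat G).rank : ℤ)) :
    ell G ≤ Nat.choose (r + 1) 2 := by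
  have hrank := card_nonMinReps_add_rank_le G
  calc ell G = #(univ.filter fun p : Fin n × Fin n => p.1 < p.2 ∧ rowSetoid G p.1 p.2) := by
        simp only [ell, forall_evenTriple_iff_rowSetoid]
    _ ≤ (#(rowSetoid G).nonMinReps + 1).choose 2 := (rowSetoid G).card_related_pairs_le
    _ ≤ (r + 1).choose 2 := Nat.choose_le_choose 2 (by omega)
end
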